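/- arXiv:1506.06901 — 2 statements merged into one kernel-verified Lean document; each statement's English description precedes it below -/
import Mathlib

section
/- Let 1 < p < ∞, σ a locally finite Borel measure on ℝⁿ, and 𝓕 a collection of dyadic cubes satisfying the σ-Carleson condition ∑_{Q ∈ 𝓕, Q ⊆ P} σ(Q) ≤ 2σ(P) for all P ∈ 𝓕. Then for every nonnegative f ∈ L^p(σ), (∑_{F ∈ 𝓕} (⟨f⟩_F^σ)^p σ(F))^{1/p} ≤ C(p) ‖f‖_{L^p(σ)}, where ⟨f⟩_F^σ = (1/σ(F)) ∫_F f dσ when σ(F) > 0 (and the term is taken to be 0 when σ(F) = 0). -/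
open MeasureTheory ENNReal
open scoped Classical

noncomputable section

def DyadicCube (n : ℕ) (k : ℤ) (j : Fin n → ℤ) : Set (Fin n → ℝ) :=
  {x | ∀ i, (j i : ℝ) / 2 ^ k ≤ x i ∧ x i < ((j i : ℝ) + 1) / 2 ^ k}

def IsDyadicCube {n : ℕ} (Q : Set (Fin n → ℝ)) : Prop :=
  ∃ k j, Q = DyadicCube n k j

/-!
Fix a level `c`. Among the finitely many cubes of a subfamily whose `σ`-average of `f` exceeds
`c`, the maximal ones are pairwise disjoint, and by the Carleson condition they carry at least
half of the total `σ`-measure. On a maximal cube `Q`, the part of `f` below `c / 2` contributes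
at most `c σ(Q) / 2` to `∫_Q f > c σ(Q)`, so
`c · ∑_{⟨f⟩_Q > c} σ(Q) ≤ 4 ∫_{2f > c} f dσ`.
Writing `⟨f⟩_Q^p ≤ 2^p ∑_{2^j < ⟨f⟩_Q} 2^{jp}` and applying this weak-type bound at every level
`c = 2^j` leaves `∫ f · ∑_{2^j < 2f} 2^{j(p-1)} dσ`, and the inner geometric series is
`≲ f^{p-1}` because `p > 1`.
-/

lemma Int.floor_mul_two_zpow_of_le {k' k : ℤ} (h : k' ≤ k) (t : ℝ) :
    ⌊t * 2 ^ k'⌋ = ⌊t * 2 ^ k⌋ / ((2 ^ (k - k').toNat : ℕ) : ℤ) := by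
  rw [← Int.floor_div_natCast]
  congr 1
  rw [Nat.cast_pow, Nat.cast_ofNat, ← zpow_natCast, Int.toNat_of_nonneg (sub_nonneg.2 h),
    mul_div_assoc, ← zpow_sub₀ two_ne_zero, _root_.sub_sub_cancel]

namespace DyadicCube

variable {n : ℕ}

lemma mem_iff_floor {k : ℤ} {j : Fin n → ℤ} {x : Fin n → ℝ} :
    x ∈ DyadicCube n k j ↔ ∀ i, ⌊x i * 2 ^ k⌋ = j i := by
  have h2k : (0 : ℝ) < 2 ^ k := zpow_pos two_pos k
  simp only [DyadicCube, Set.mem_ofPred_eq, Int.floor_eq_iff, div_le_iff₀ h2k, lt_div_iff₀ h2k]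

lemma subset_of_le {k' k : ℤ} (h : k' ≤ k) {j j' : Fin n → ℤ}
    {x : Fin n → ℝ} (hx : x ∈ DyadicCube n k j) (hx' : x ∈ DyadicCube n k' j') :
    DyadicCube n k j ⊆ DyadicCube n k' j' := by
  intro y hy
  rw [mem_iff_floor] at hx hx' hy ⊢
  intro i
  rw [← hx' i, Int.floor_mul_two_zpow_of_le h, Int.floor_mul_two_zpow_of_le h, hx i, hy i]

end DyadicCube

namespace IsDyadicCube

variable {n : ℕ} {Q Q' : Set (Fin n → ℝ)}

lemma subset_or_subset_or_disjoint (hQ : IsDyadicCube Q) (hQ' : IsDyadicCube Q') :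
    Q ⊆ Q' ∨ Q' ⊆ Q ∨ Disjoint Q Q' := by
  obtain ⟨k, j, rfl⟩ := hQ
  obtain ⟨k', j', rfl⟩ := hQ'
  by_cases hdisj : Disjoint (DyadicCube n k j) (DyadicCube n k' j')
  · exact Or.inr (Or.inr hdisj)
  obtain ⟨x, hx, hx'⟩ := Set.not_disjoint_iff.1 hdisj
  rcases le_total k' k with hk | hk
  · exact Or.inl (DyadicCube.subset_of_le hk hx hx')
  · exact Or.inr (Or.inl (DyadicCube.subset_of_le hk hx' hx))

lemma measurableSet (hQ : IsDyadicCube Q) : MeasurableSet Q := by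
  obtain ⟨k, j, rfl⟩ := hQ
  simp only [DyadicCube, Set.ofPred_forall]
  exact MeasurableSet.iInter fun i =>
    (measurableSet_le measurable_const (measurable_pi_apply i)).inter
      (measurableSet_lt (measurable_pi_apply i) measurable_const)

lemma measure_lt_top (σ : Measure (Fin n → ℝ)) [IsLocallyFiniteMeasure σ]
    (hQ : IsDyadicCube Q) : σ Q < ∞ := by
  obtain ⟨k, j, rfl⟩ := hQ
  have hsub : DyadicCube n k j ⊆
      Set.Icc (fun i => (j i : ℝ) / 2 ^ k) (fun i => ((j i : ℝ) + 1) / 2 ^ k) :=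
    fun _ hx => ⟨fun i => (hx i).1, fun i => (hx i).2.le⟩
  exact (measure_mono hsub).trans_lt isCompact_Icc.measure_lt_top

end IsDyadicCube

lemma ENNReal.two_zpow_rpow (j : ℤ) (q : ℝ) : ((2 : ℝ≥0∞) ^ j) ^ q = (2 ^ q) ^ j := by
  rw [← ENNReal.rpow_intCast, ← ENNReal.rpow_intCast, ← ENNReal.rpow_mul, ← ENNReal.rpow_mul,
    mul_comm]

lemma ENNReal.rpow_le_two_rpow_mul_tsum {q : ℝ} (hq : 0 < q) (a : ℝ≥0∞) :
    a ^ q ≤ 2 ^ q * ∑' j : ℤ, if (2 : ℝ≥0∞) ^ j < a then ((2 : ℝ≥0∞) ^ j) ^ q else 0 := by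
  rcases eq_or_ne a 0 with rfl | ha0
  · simp [ENNReal.zero_rpow_of_pos hq]
  rcases eq_or_ne a ∞ with rfl | hatop
  · have hdiv : ∑' j : ℤ, (if (2 : ℝ≥0∞) ^ j < ∞ then ((2 : ℝ≥0∞) ^ j) ^ q else 0) = ∞ := by
      refine top_unique ?_
      calc ∞ = ∑' m : ℕ, ((2 : ℝ≥0∞) ^ q) ^ m := by
            rw [ENNReal.tsum_geometric, tsub_eq_zero_of_le (ENNReal.one_le_rpow one_le_two hq),
              ENNReal.inv_zero]
        _ = ∑' m : ℕ, (if (2 : ℝ≥0∞) ^ (m : ℤ) < ∞ then ((2 : ℝ≥0∞) ^ (m : ℤ)) ^ q else 0) :=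
            tsum_congr fun m => by
              rw [if_pos (zpow_lt_top two_ne_zero ofNat_ne_top _), two_zpow_rpow, zpow_natCast]
        _ ≤ _ := ENNReal.tsum_comp_le_tsum_of_injective Nat.cast_injective
            fun j : ℤ => if (2 : ℝ≥0∞) ^ j < ∞ then ((2 : ℝ≥0∞) ^ j) ^ q else 0
    rw [hdiv, ENNReal.mul_top (ENNReal.rpow_pos two_pos ofNat_ne_top).ne']
    exact le_top
  obtain ⟨k, hk, hk'⟩ := ENNReal.exists_mem_Ioc_zpow ha0 hatop one_lt_two ofNat_ne_top
  calc a ^ q ≤ ((2 : ℝ≥0∞) ^ (k + 1)) ^ q := ENNReal.rpow_le_rpow hk' hq.le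
    _ = 2 ^ q * ((2 : ℝ≥0∞) ^ k) ^ q := by
        rw [ENNReal.zpow_add two_ne_zero ofNat_ne_top, zpow_one,
          ENNReal.mul_rpow_of_nonneg _ _ hq.le, mul_comm]
    _ ≤ _ := by
        gcongr
        exact (if_pos hk).symm.le.trans (ENNReal.le_tsum k)

lemma ENNReal.tsum_ite_two_zpow_lt_le {q : ℝ} (hq : 0 < q) (b : ℝ≥0∞) :
    ∑' j : ℤ, (if (2 : ℝ≥0∞) ^ j < b then ((2 : ℝ≥0∞) ^ j) ^ q else 0) ≤
      (1 - (2 ^ q)⁻¹)⁻¹ * b ^ q := by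
  rcases eq_or_ne b ∞ with rfl | hbtop
  · rw [ENNReal.top_rpow_of_pos hq, ENNReal.mul_top (ENNReal.inv_ne_zero.2 (sub_ne_top one_ne_top))]
    exact le_top
  rcases eq_or_ne b 0 with rfl | hb0
  · simp
  obtain ⟨k, hk, hk'⟩ := ENNReal.exists_mem_Ioc_zpow hb0 hbtop one_lt_two ofNat_ne_top
  set x : ℝ≥0∞ := 2 ^ q
  have hx0 : x ≠ 0 := (ENNReal.rpow_pos two_pos ofNat_ne_top).ne'
  have hxtop : x ≠ ∞ := ENNReal.rpow_ne_top_of_nonneg hq.le ofNat_ne_top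
  have hsupp : (Function.support fun j : ℤ =>
      if (2 : ℝ≥0∞) ^ j < b then ((2 : ℝ≥0∞) ^ j) ^ q else 0) ⊆ Set.range fun m : ℕ => k - m := by
    intro j hj
    have hjb : (2 : ℝ≥0∞) ^ j < b := by
      by_contra h
      exact hj (if_neg h)
    have : j < k + 1 := (monotone_zpow one_le_two).reflect_lt (hjb.trans_le hk')
    exact ⟨(k - j).toNat, show k - ((k - j).toNat : ℤ) = j by omega⟩
  have hinj : Function.Injective fun m : ℕ => k - m := fun m n h => by simpa using h
  rw [← hinj.tsum_eq hsupp]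
  calc ∑' m : ℕ, (if (2 : ℝ≥0∞) ^ (k - m) < b then ((2 : ℝ≥0∞) ^ (k - m)) ^ q else 0)
      ≤ ∑' m : ℕ, x ^ k * x⁻¹ ^ m := ENNReal.tsum_le_tsum fun m => by
        split_ifs
        · rw [two_zpow_rpow, ENNReal.zpow_sub hx0 hxtop, zpow_natCast, ENNReal.inv_pow]
        · exact zero_le
    _ = x ^ k * (1 - x⁻¹)⁻¹ := by rw [ENNReal.tsum_mul_left, ENNReal.tsum_geometric]
    _ ≤ b ^ q * (1 - x⁻¹)⁻¹ := by
        gcongr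
        rw [← two_zpow_rpow]
        exact ENNReal.rpow_le_rpow hk.le hq.le
    _ = _ := mul_comm _ _

lemma ENNReal.sum_rpow_mul_le_tsum {ι : Type*} {p : ℝ} (hp : 0 < p) (t : Finset ι)
    (a w : ι → ℝ≥0∞) :
    ∑ i ∈ t, a i ^ p * w i ≤
      2 ^ p * ∑' j : ℤ, ((2 : ℝ≥0∞) ^ j) ^ p * ∑ i ∈ t with (2 : ℝ≥0∞) ^ j < a i, w i :=
  calc ∑ i ∈ t, a i ^ p * w i
      ≤ ∑ i ∈ t, (2 ^ p * ∑' j : ℤ,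
          if (2 : ℝ≥0∞) ^ j < a i then ((2 : ℝ≥0∞) ^ j) ^ p else 0) * w i := by
        gcongr with i
        exact rpow_le_two_rpow_mul_tsum hp _
    _ = _ := by
        simp_rw [mul_assoc, ← Finset.mul_sum, ← ENNReal.tsum_mul_right,
          ← Summable.tsum_finsetSum fun _ _ => ENNReal.summable, Finset.sum_filter,
          Finset.mul_sum, ite_mul, mul_ite, zero_mul, mul_zero]

variable {α : Type*}

def IsLaminar (𝓕 : Set (Set α)) : Prop :=
  𝓕.Pairwise fun Q Q' => Q ⊆ Q' ∨ Q' ⊆ Q ∨ Disjoint Q Q'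

lemma IsLaminar.exists_pairwiseDisjoint_cover {𝓕 : Set (Set α)} (h𝓕 : IsLaminar 𝓕)
    {G : Finset (Set α)} (hG : ↑G ⊆ 𝓕) :
    ∃ M ⊆ G, (M : Set (Set α)).PairwiseDisjoint id ∧ ∀ Q ∈ G, ∃ Q' ∈ M, Q ⊆ Q' := by
  refine ⟨G.filter (Maximal (· ∈ G)), Finset.filter_subset _ _, ?_, fun Q hQ => ?_⟩
  · intro Q hQ Q' hQ' hne
    simp only [Finset.coe_filter, Set.mem_ofPred_eq] at hQ hQ'
    rcases h𝓕 (hG hQ.1) (hG hQ'.1) hne with hsub | hsub | hdisj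
    · exact absurd (hQ.2.eq_of_le hQ'.1 hsub) hne
    · exact absurd (hQ'.2.eq_of_le hQ.1 hsub).symm hne
    · exact hdisj
  · obtain ⟨Q', hle, hmax⟩ := G.exists_le_maximal hQ
    exact ⟨Q', Finset.mem_filter.2 ⟨hmax.prop, hmax⟩, hle⟩

variable [MeasurableSpace α] {μ : Measure α} {Λ : ℝ≥0∞} {𝓕 : Set (Set α)}

def IsCarlesonFamily (μ : Measure α) (Λ : ℝ≥0∞) (𝓕 : Set (Set α)) : Prop :=
  ∀ P ∈ 𝓕, ∑' Q : {Q // Q ∈ 𝓕 ∧ Q ⊆ P}, μ Q.1 ≤ Λ * μ P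

lemma IsCarlesonFamily.sum_le (h𝓕 : IsCarlesonFamily μ Λ 𝓕) {P : Set α} (hP : P ∈ 𝓕)
    {t : Finset (Set α)} (ht : ∀ Q ∈ t, Q ∈ 𝓕 ∧ Q ⊆ P) : ∑ Q ∈ t, μ Q ≤ Λ * μ P :=
  calc ∑ Q ∈ t, μ Q = ∑' Q : t, μ Q := (Finset.tsum_subtype t μ).symm
    _ ≤ ∑' Q : {Q // Q ∈ 𝓕 ∧ Q ⊆ P}, μ Q.1 :=
      ENNReal.tsum_comp_le_tsum_of_injective
        (f := fun Q : t => (⟨Q.1, ht Q.1 Q.2⟩ : {Q // Q ∈ 𝓕 ∧ Q ⊆ P}))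
        (fun _ _ h => Subtype.ext (congrArg Subtype.val h :)) (fun Q => μ Q.1)
    _ ≤ Λ * μ P := h𝓕 P hP

lemma mul_measure_le_of_lt_setLAverage {s : Set α} (hs : μ s ≠ ∞) {f : α → ℝ≥0∞} {c : ℝ≥0∞}
    (hc : c < ⨍⁻ x in s, f x ∂μ) :
    c * μ s ≤ 2 * ∫⁻ x in s, {x | c < 2 * f x}.indicator f x ∂μ := by
  set g := {x | c < 2 * f x}.indicator f
  have hf_le : ∀ x, f x ≤ g x + c / 2 := by
    intro x
    by_cases hx : c < 2 * f x
    · simp [g, hx]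
    · rw [show g x = 0 from Set.indicator_of_notMem (s := {x | c < 2 * f x}) hx f, zero_add,
        ENNReal.le_div_iff_mul_le (Or.inl two_ne_zero) (Or.inl ofNat_ne_top), mul_comm]
      exact not_lt.1 hx
  have hhalves : c / 2 * μ s + c / 2 * μ s ≤ (∫⁻ x in s, g x ∂μ) + c / 2 * μ s :=
    calc c / 2 * μ s + c / 2 * μ s = c * μ s := by rw [← add_mul, ENNReal.add_halves]
      _ ≤ ∫⁻ x in s, f x ∂μ := ENNReal.mul_le_of_le_div (setLAverage_eq μ f s ▸ hc.le)
      _ ≤ ∫⁻ x in s, (g x + c / 2) ∂μ := lintegral_mono hf_le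
      _ = _ := by rw [lintegral_add_right _ measurable_const, setLIntegral_const]
  calc c * μ s = 2 * (c / 2 * μ s) := by
        rw [← mul_assoc, ENNReal.mul_div_cancel two_ne_zero ofNat_ne_top]
    _ ≤ 2 * ∫⁻ x in s, g x ∂μ := by
        gcongr
        exact ENNReal.le_of_add_le_add_right
          (ENNReal.mul_ne_top (ENNReal.div_ne_top hc.ne_top two_ne_zero) hs) hhalves

lemma IsCarlesonFamily.mul_sum_measure_le (hC : IsCarlesonFamily μ Λ 𝓕) (hL : IsLaminar 𝓕)
    (hmeas : ∀ Q ∈ 𝓕, MeasurableSet Q) (hfin : ∀ Q ∈ 𝓕, μ Q ≠ ∞) {t : Finset (Set α)}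
    (ht : ↑t ⊆ 𝓕) (f : α → ℝ≥0∞) (c : ℝ≥0∞) :
    c * ∑ Q ∈ t with c < ⨍⁻ x in Q, f x ∂μ, μ Q ≤
      2 * Λ * ∫⁻ x, {x | c < 2 * f x}.indicator f x ∂μ := by
  set G := t.filter fun Q => c < ⨍⁻ x in Q, f x ∂μ
  set g := {x | c < 2 * f x}.indicator f
  have hG : ↑G ⊆ 𝓕 := fun Q hQ => ht (Finset.mem_of_mem_filter Q hQ)
  obtain ⟨M, hMG, hMdisj, hcover⟩ := hL.exists_pairwiseDisjoint_cover hG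
  have hgroup : ∑ Q ∈ G, μ Q ≤ ∑ Q' ∈ M, ∑ Q ∈ G with Q ⊆ Q', μ Q := by
    simp_rw [Finset.sum_filter]
    rw [Finset.sum_comm]
    refine Finset.sum_le_sum fun Q hQ => ?_
    obtain ⟨Q', hQ'M, hQQ'⟩ := hcover Q hQ
    exact (if_pos hQQ').symm.le.trans
      (Finset.single_le_sum (f := fun Q' => if Q ⊆ Q' then μ Q else 0) (fun _ _ => zero_le) hQ'M)
  calc c * ∑ Q ∈ G, μ Q ≤ c * ∑ Q' ∈ M, Λ * μ Q' := by
        gcongr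
        refine hgroup.trans <| Finset.sum_le_sum fun Q' hQ' =>
          hC.sum_le (hG (hMG hQ')) fun Q hQ => ?_
        rw [Finset.mem_filter] at hQ
        exact ⟨hG hQ.1, hQ.2⟩
    _ = Λ * ∑ Q' ∈ M, c * μ Q' := by
        simp only [Finset.mul_sum, mul_left_comm]
    _ ≤ Λ * ∑ Q' ∈ M, 2 * ∫⁻ x in Q', g x ∂μ := by
        gcongr Λ * ∑ Q' ∈ M, ?_ with Q' hQ'
        exact mul_measure_le_of_lt_setLAverage (hfin _ (hG (hMG hQ')))
          (Finset.mem_filter.1 (hMG hQ')).2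
    _ = 2 * Λ * ∫⁻ x in ⋃ Q' ∈ M, Q', g x ∂μ := by
        have hunion : ∫⁻ x in ⋃ Q' ∈ M, Q', g x ∂μ = ∑ Q' ∈ M, ∫⁻ x in Q', g x ∂μ :=
          lintegral_biUnion_finset hMdisj (fun Q' hQ' => hmeas _ (hG (hMG hQ'))) g
        rw [hunion, ← Finset.mul_sum, mul_left_comm, mul_assoc]
    _ ≤ 2 * Λ * ∫⁻ x, g x ∂μ := by
        gcongr 2 * Λ * ?_
        exact setLIntegral_le_lintegral _ _

lemma tsum_mul_lintegral_indicator {ι : Type*} [Countable ι] {f : α → ℝ≥0∞} (hf : Measurable f)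
    {s : ι → Set α} (hs : ∀ i, MeasurableSet (s i)) (c : ι → ℝ≥0∞) :
    ∑' i, c i * ∫⁻ x, (s i).indicator f x ∂μ =
      ∫⁻ x, f x * ∑' i, (s i).indicator (fun _ => c i) x ∂μ := by
  simp_rw [← lintegral_const_mul _ (hf.indicator (hs _))]
  rw [← lintegral_tsum fun i => ((hf.indicator (hs i)).const_mul _).aemeasurable]
  congr 1 with x
  rw [← ENNReal.tsum_mul_left]
  congr 1 with i
  simp only [Set.indicator_apply]
  split_ifs <;> ring

/-- `2 ^ p` from the dyadic layers of the averages, `2 · 2 ^ (p - 1)` from the weak-type bound at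
threshold `2f > c`, and the sum of the geometric series `∑_{j ≤ 0} 2 ^ {j(p-1)}`. -/
def carlesonConstant (p : ℝ) : ℝ≥0∞ := 4 ^ p * (1 - (2 ^ (p - 1))⁻¹)⁻¹

lemma carlesonConstant_ne_top {p : ℝ} (hp : 1 < p) : carlesonConstant p ≠ ∞ := by
  have h1 : 1 < (2 : ℝ≥0∞) ^ (p - 1) := ENNReal.one_lt_rpow one_lt_two (by linarith)
  refine ENNReal.mul_ne_top (rpow_ne_top_of_nonneg (by linarith) ofNat_ne_top)
    (ENNReal.inv_ne_top.2 (tsub_pos_of_lt (ENNReal.inv_lt_one.2 h1)).ne')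

lemma IsCarlesonFamily.sum_setLAverage_rpow_mul_le (hC : IsCarlesonFamily μ Λ 𝓕)
    (hL : IsLaminar 𝓕) (hmeas : ∀ Q ∈ 𝓕, MeasurableSet Q) (hfin : ∀ Q ∈ 𝓕, μ Q ≠ ∞)
    {p : ℝ} (hp : 1 < p) {f : α → ℝ≥0∞} (hf : Measurable f) {t : Finset (Set α)}
    (ht : ↑t ⊆ 𝓕) :
    ∑ Q ∈ t, (⨍⁻ x in Q, f x ∂μ) ^ p * μ Q ≤ carlesonConstant p * Λ * ∫⁻ x, f x ^ p ∂μ := by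
  set q := p - 1
  have hq : 0 < q := sub_pos.2 hp
  have hpow : ∀ y : ℝ≥0∞, y ^ p = y ^ q * y := fun y => by
    rw [show p = q + 1 by ring, ENNReal.rpow_add_of_nonneg q 1 hq.le zero_le_one, ENNReal.rpow_one]
  set s : ℤ → Set α := fun j => {x | (2 : ℝ≥0∞) ^ j < 2 * f x}
  have hs : ∀ j, MeasurableSet (s j) := fun j =>
    measurableSet_lt measurable_const (hf.const_mul 2)
  calc ∑ Q ∈ t, (⨍⁻ x in Q, f x ∂μ) ^ p * μ Q
      ≤ 2 ^ p * ∑' j : ℤ, ((2 : ℝ≥0∞) ^ j) ^ q *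
          ((2 : ℝ≥0∞) ^ j * ∑ Q ∈ t with (2 : ℝ≥0∞) ^ j < ⨍⁻ x in Q, f x ∂μ, μ Q) := by
        simp_rw [← mul_assoc, ← hpow]
        exact ENNReal.sum_rpow_mul_le_tsum (by linarith) t _ _
    _ ≤ 2 ^ p * ∑' j : ℤ, ((2 : ℝ≥0∞) ^ j) ^ q * (2 * Λ * ∫⁻ x, (s j).indicator f x ∂μ) := by
        gcongr 2 ^ p * ∑' j : ℤ, ((2 : ℝ≥0∞) ^ j) ^ q * ?_ with j
        exact hC.mul_sum_measure_le hL hmeas hfin ht f _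
    _ = 2 ^ p * (2 * Λ) *
          ∫⁻ x, f x * ∑' j : ℤ, (s j).indicator (fun _ => ((2 : ℝ≥0∞) ^ j) ^ q) x ∂μ := by
        simp_rw [mul_left_comm _ (2 * Λ), ENNReal.tsum_mul_left,
          tsum_mul_lintegral_indicator hf hs, mul_assoc]
    _ ≤ 2 ^ p * (2 * Λ) * ∫⁻ x, f x * ((1 - (2 ^ q)⁻¹)⁻¹ * (2 * f x) ^ q) ∂μ := by
        gcongr with x
        simpa only [s, Set.indicator_apply, Set.mem_ofPred_eq]
          using ENNReal.tsum_ite_two_zpow_lt_le hq (2 * f x)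
    _ = carlesonConstant p * Λ * ∫⁻ x, f x ^ p ∂μ := by
        have hpt : ∀ x, f x * ((1 - (2 ^ q)⁻¹)⁻¹ * (2 * f x) ^ q) =
            (1 - (2 ^ q)⁻¹)⁻¹ * 2 ^ q * f x ^ p := fun x => by
          rw [ENNReal.mul_rpow_of_nonneg _ _ hq.le, hpow]
          ring
        simp_rw [hpt]
        rw [lintegral_const_mul _ (hf.pow_const p), carlesonConstant,
          show (4 : ℝ≥0∞) = 2 * 2 by norm_num, ENNReal.mul_rpow_of_nonneg _ _ (by linarith), hpow 2]
        ring

theorem IsCarlesonFamily.tsum_setLAverage_rpow_mul_le (hC : IsCarlesonFamily μ Λ 𝓕)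
    (hL : IsLaminar 𝓕) (hmeas : ∀ Q ∈ 𝓕, MeasurableSet Q) (hfin : ∀ Q ∈ 𝓕, μ Q ≠ ∞)
    {p : ℝ} (hp : 1 < p) {f : α → ℝ≥0∞} (hf : Measurable f) :
    ∑' Q : 𝓕, (⨍⁻ x in Q, f x ∂μ) ^ p * μ Q ≤ carlesonConstant p * Λ * ∫⁻ x, f x ^ p ∂μ := by
  rw [ENNReal.tsum_eq_iSup_sum]
  refine iSup_le fun s => ?_
  refine (Finset.sum_map s (Function.Embedding.subtype _)
    fun Q => (⨍⁻ x in Q, f x ∂μ) ^ p * μ Q).symm.trans_le ?_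
  refine hC.sum_setLAverage_rpow_mul_le hL hmeas hfin hp hf fun Q hQ => ?_
  obtain ⟨Q, -, rfl⟩ := Finset.mem_map.1 hQ
  exact Q.2

lemma setLAverage_eq_ite (μ : Measure α) (f : α → ℝ≥0∞) (s : Set α) :
    ⨍⁻ x in s, f x ∂μ = if μ s = 0 then 0 else (∫⁻ x in s, f x ∂μ) / μ s := by
  rw [setLAverage_eq]
  split_ifs with h
  · rw [Measure.restrict_eq_zero.2 h, lintegral_zero_measure, ENNReal.zero_div]
  · rfl

theorem dyadic_Carleson_embedding (p : ℝ) (hp : 1 < p) :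
    ∃ C : ℝ≥0∞, C < ∞ ∧
      ∀ (n : ℕ) (σ : Measure (Fin n → ℝ)), IsLocallyFiniteMeasure σ →
      ∀ 𝓕 : Set (Set (Fin n → ℝ)), (∀ F ∈ 𝓕, IsDyadicCube F) →
      (∀ P ∈ 𝓕, ∑' Q : {Q // Q ∈ 𝓕 ∧ Q ⊆ P}, σ Q.1 ≤ 2 * σ P) →
      ∀ f : (Fin n → ℝ) → ℝ≥0∞, Measurable f →
      (∑' F : 𝓕, (if σ F.1 = 0 then 0 else (∫⁻ x in F.1, f x ∂σ) / σ F.1) ^ p * σ F.1) ^ (1 / p)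
        ≤ C * (∫⁻ x, f x ^ p ∂σ) ^ (1 / p) := by
  have h1p : 0 ≤ 1 / p := div_nonneg zero_le_one (by linarith)
  refine ⟨(carlesonConstant p * 2) ^ (1 / p), ENNReal.rpow_lt_top_of_nonneg h1p
    (ENNReal.mul_ne_top (carlesonConstant_ne_top hp) ofNat_ne_top), ?_⟩
  intro n σ hσ 𝓕 h𝓕 hC f hf
  have hL : IsLaminar 𝓕 := fun Q hQ Q' hQ' _ =>
    (h𝓕 Q hQ).subset_or_subset_or_disjoint (h𝓕 Q' hQ')
  have hbound := IsCarlesonFamily.tsum_setLAverage_rpow_mul_le hC hL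
    (fun Q hQ => (h𝓕 Q hQ).measurableSet) (fun Q hQ => ((h𝓕 Q hQ).measure_lt_top σ).ne) hp hf
  simp only [← setLAverage_eq_ite]
  rw [← ENNReal.mul_rpow_of_nonneg _ _ h1p]
  exact ENNReal.rpow_le_rpow hbound h1p
end
end

section
/- Let 0 < q < ∞ and s = ∞, and let μ be a positive locally finite Borel measure on ℝⁿ. Let (b_Q)_{Q ∈ 𝒟} be nonnegative reals. Then ‖sup_{Q ∈ 𝒟} b_Q χ_Q‖_{L^q(μ)} ≤ C if and only if for every family (E_Q)_{Q ∈ 𝒟} of pairwise disjoint measurable sets with E_Q ⊆ Q, (∑_{Q ∈ 𝒟} b_Q^q μ(E_Q))^{1/q} ≤ C. -/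
/-!
Since `t ↦ t ^ q` is an order isomorphism of `[0, ∞]`, `(sup_Q b_Q χ_Q) ^ q` equals
`sup_Q b_Q ^ q χ_Q`, so only the case `q = 1` matters. For disjoint `E_Q ⊆ Q`, `∑ b_Q μ(E_Q)`
is the integral over `⋃ E_Q` of a function below the supremum. Conversely, over a finite
subfamily the supremum is attained at every point; the sets where `Q` attains it, made disjoint
along a well-order of the cubes, linearize the finite supremum, and monotone convergence passes
to the whole family.
-/

open MeasureTheory ENNReal

noncomputable section

open Set Function

theorem exists_subordinate_pairwise_disjoint_iUnion_eq {α ι : Type*} [MeasurableSpace α]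
    [Countable ι] {T : ι → Set α} (hT : ∀ i, MeasurableSet (T i)) :
    ∃ E : ι → Set α, (∀ i, E i ⊆ T i) ∧ (∀ i, MeasurableSet (E i)) ∧
      Pairwise (Disjoint on E) ∧ ⋃ i, E i = ⋃ i, T i := by
  obtain ⟨_, _⟩ := exists_wellFoundedLT ι
  refine ⟨fun i => T i \ ⋃ j < i, T j, fun i => sdiff_subset,
    fun i => (hT i).diff (.iUnion fun j => .iUnion fun _ => hT j), ?_, ?_⟩
  · intro i j hij
    rcases hij.lt_or_gt with h | h
    · exact disjoint_left.2 fun x hxi hxj => hxj.2 (mem_biUnion h (sdiff_subset hxi))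
    · exact disjoint_left.2 fun x hxi hxj => hxi.2 (mem_biUnion h (sdiff_subset hxj))
  · refine (iUnion_mono fun i => sdiff_subset).antisymm (iUnion_subset fun i x hx => ?_)
    obtain ⟨j, hxj, hmin⟩ := wellFounded_lt.has_min {j | x ∈ T j} ⟨i, hx⟩
    exact mem_iUnion.2 ⟨j, hxj, by simpa using fun k hk hxk => hmin k hxk hk⟩

theorem ENNReal.iSup_rpow {ι : Sort*} (f : ι → ℝ≥0∞) {q : ℝ} (hq : 0 < q) :
    (⨆ i, f i) ^ q = ⨆ i, f i ^ q :=
  (orderIsoRpow q hq).map_iSup f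

theorem iSup_indicator_rpow {α ι : Type*} (S : ι → Set α) (c : ι → ℝ≥0∞) {q : ℝ}
    (hq : 0 < q) (x : α) :
    (⨆ i, (S i).indicator (fun _ => c i) x) ^ q =
      ⨆ i, (S i).indicator (fun _ => c i ^ q) x := by
  rw [ENNReal.iSup_rpow _ hq]
  refine iSup_congr fun i => ?_
  by_cases hx : x ∈ S i <;> simp [hx, hq]

section IndicatorSupremum

variable {α ι : Type*} [MeasurableSpace α] [Countable ι] {μ : Measure α}
  {S : ι → Set α} {c : ι → ℝ≥0∞}

theorem tsum_mul_measure_le_lintegral_iSup_indicator {E : ι → Set α} (hES : ∀ i, E i ⊆ S i)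
    (hE : ∀ i, MeasurableSet (E i)) (hd : Pairwise (Disjoint on E)) :
    ∑' i, c i * μ (E i) ≤ ∫⁻ x, ⨆ i, (S i).indicator (fun _ => c i) x ∂μ :=
  calc ∑' i, c i * μ (E i)
      = ∑' i, ∫⁻ _ in E i, c i ∂μ := by simp only [setLIntegral_const]
    _ ≤ ∑' i, ∫⁻ x in E i, ⨆ j, (S j).indicator (fun _ => c j) x ∂μ := by
      refine ENNReal.tsum_le_tsum fun i => setLIntegral_mono' (hE i) fun x hx => ?_
      exact le_iSup_of_le i (by rw [indicator_of_mem (hES i hx)])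
    _ = ∫⁻ x in ⋃ i, E i, ⨆ j, (S j).indicator (fun _ => c j) x ∂μ :=
      (lintegral_iUnion hE hd _).symm
    _ ≤ _ := setLIntegral_le_lintegral _ _

theorem measurable_biSup_indicator (hS : ∀ i, MeasurableSet (S i)) (p : ι → Prop) :
    Measurable fun x => ⨆ i, ⨆ _ : p i, (S i).indicator (fun _ => c i) x :=
  .iSup fun i => .iSup fun _ => measurable_const.indicator (hS i)

theorem lintegral_biSup_indicator_le (hS : ∀ i, MeasurableSet (S i)) {M : ℝ≥0∞}
    (hM : ∀ E : ι → Set α, (∀ i, E i ⊆ S i) → (∀ i, MeasurableSet (E i)) →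
      Pairwise (Disjoint on E) → ∑' i, c i * μ (E i) ≤ M) (s : Finset ι) :
    ∫⁻ x, ⨆ i ∈ s, (S i).indicator (fun _ => c i) x ∂μ ≤ M := by
  set F := fun x => ⨆ i ∈ s, (S i).indicator (fun _ => c i) x
  have hF : Measurable F := measurable_biSup_indicator hS (· ∈ s)
  -- a finite supremum is attained, so `F` lives on the sets where some `S i` attains it
  have hsupp : support F ⊆ ⋃ i, S i ∩ {x | F x ≤ c i} := by
    intro x hx
    have hs : s.Nonempty := Finset.nonempty_iff_ne_empty.2 fun h => hx (by simp [F, h])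
    obtain ⟨i, -, hmax⟩ := s.exists_max_image (fun i => (S i).indicator (fun _ => c i) x) hs
    have hFi : F x ≤ (S i).indicator (fun _ => c i) x := iSup₂_le hmax
    have hxi : x ∈ S i := by
      by_contra hxi
      exact hx (le_antisymm (by simpa [indicator_of_notMem hxi] using hFi) bot_le)
    exact mem_iUnion.2 ⟨i, hxi, by simpa [indicator_of_mem hxi] using hFi⟩
  obtain ⟨E, hET, hE, hd, hU⟩ := exists_subordinate_pairwise_disjoint_iUnion_eq
    fun i => (hS i).inter (measurableSet_le hF measurable_const)
  calc ∫⁻ x, F x ∂μ = ∫⁻ x in ⋃ i, E i, F x ∂μ := by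
        rw [hU, setLIntegral_eq_of_support_subset hsupp]
    _ = ∑' i, ∫⁻ x in E i, F x ∂μ := lintegral_iUnion hE hd _
    _ ≤ ∑' i, ∫⁻ _ in E i, c i ∂μ :=
      ENNReal.tsum_le_tsum fun i => setLIntegral_mono' (hE i) fun x hx => (hET i hx).2
    _ = ∑' i, c i * μ (E i) := by simp only [setLIntegral_const]
    _ ≤ M := hM E (fun i => (hET i).trans inter_subset_left) hE hd

theorem lintegral_iSup_indicator_le (hS : ∀ i, MeasurableSet (S i)) {M : ℝ≥0∞}
    (hM : ∀ E : ι → Set α, (∀ i, E i ⊆ S i) → (∀ i, MeasurableSet (E i)) →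
      Pairwise (Disjoint on E) → ∑' i, c i * μ (E i) ≤ M) :
    ∫⁻ x, ⨆ i, (S i).indicator (fun _ => c i) x ∂μ ≤ M :=
  calc ∫⁻ x, ⨆ i, (S i).indicator (fun _ => c i) x ∂μ
      = ∫⁻ x, ⨆ s : Finset ι, ⨆ i ∈ s, (S i).indicator (fun _ => c i) x ∂μ :=
        lintegral_congr fun _ => iSup_eq_iSup_finset _
    _ = ⨆ s : Finset ι, ∫⁻ x, ⨆ i ∈ s, (S i).indicator (fun _ => c i) x ∂μ :=
        lintegral_iSup_directed (fun s => (measurable_biSup_indicator hS (· ∈ s)).aemeasurable)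
          (Monotone.directed_le fun _ _ hst _ => biSup_mono fun _ hi => Finset.mem_of_subset hst hi)
    _ ≤ M := iSup_le (lintegral_biSup_indicator_le hS hM)

end IndicatorSupremum

theorem measurableSet_dyadicCube (n : ℕ) (k : ℤ) (j : Fin n → ℤ) :
    MeasurableSet (DyadicCube n k j) := by
  have : DyadicCube n k j = univ.pi fun i => Ico ((j i : ℝ) / 2 ^ k) ((j i + 1) / 2 ^ k) := by
    ext x
    simp [DyadicCube]
  exact this ▸ .univ_pi fun _ => measurableSet_Ico

theorem IsDyadicCube.measurableSet_s9 {n : ℕ} {Q : Set (Fin n → ℝ)} (hQ : IsDyadicCube Q) :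
    MeasurableSet Q := by
  obtain ⟨k, j, rfl⟩ := hQ
  exact measurableSet_dyadicCube n k j

instance (n : ℕ) : Countable {Q : Set (Fin n → ℝ) // IsDyadicCube Q} :=
  ((countable_range fun p : ℤ × (Fin n → ℤ) => DyadicCube n p.1 p.2).mono
    (by rintro _ ⟨k, j, rfl⟩; exact ⟨(k, j), rfl⟩)).to_subtype

theorem lq_linfty_norm_iff_disjoint_sets_general
    {n : ℕ} (μ : Measure (Fin n → ℝ))
    (q : ℝ) (hq : 0 < q)
    (b : Set (Fin n → ℝ) → ℝ≥0∞) (C : ℝ≥0∞) :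
    (∫⁻ x, (⨆ Q : {Q : Set (Fin n → ℝ) // IsDyadicCube Q},
        Set.indicator Q.1 (fun _ => b Q.1) x) ^ q ∂μ) ^ (1 / q) ≤ C
    ↔ ∀ E : Set (Fin n → ℝ) → Set (Fin n → ℝ),
        (∀ Q : Set (Fin n → ℝ), IsDyadicCube Q → E Q ⊆ Q ∧ MeasurableSet (E Q)) →
        (∀ Q Q' : Set (Fin n → ℝ), IsDyadicCube Q → IsDyadicCube Q' → Q ≠ Q' →
          Disjoint (E Q) (E Q')) →
        (∑' Q : {Q : Set (Fin n → ℝ) // IsDyadicCube Q}, b Q.1 ^ q * μ (E Q.1)) ^ (1 / q) ≤ C := by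
  simp only [iSup_indicator_rpow _ _ hq, one_div, ENNReal.rpow_inv_le_iff hq]
  constructor
  · intro h E hE hd
    refine le_trans ?_ h
    exact tsum_mul_measure_le_lintegral_iSup_indicator (fun Q => (hE Q.1 Q.2).1)
      (fun Q => (hE Q.1 Q.2).2) fun Q Q' hne => hd Q Q' Q.2 Q'.2 (Subtype.coe_ne_coe.2 hne)
  · intro h
    refine lintegral_iSup_indicator_le (fun Q => Q.2.measurableSet_s9) fun E hES hE hd => ?_
    classical
    simpa [Subtype.prop] using h (fun Q => if hQ : IsDyadicCube Q then E ⟨Q, hQ⟩ else ∅)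
      (fun Q hQ => by simpa [hQ] using ⟨hES _, hE _⟩)
      fun Q Q' hQ hQ' hne => by simpa [hQ, hQ'] using hd fun h => hne (congrArg Subtype.val h)

theorem lq_linfty_norm_iff_disjoint_sets
    {n : ℕ} (μ : Measure (Fin n → ℝ)) [IsLocallyFiniteMeasure μ]
    (q : ℝ) (hq : 0 < q)
    (b : Set (Fin n → ℝ) → ℝ≥0∞) (C : ℝ≥0∞) :
    (∫⁻ x, (⨆ Q : {Q : Set (Fin n → ℝ) // IsDyadicCube Q},
        Set.indicator Q.1 (fun _ => b Q.1) x) ^ q ∂μ) ^ (1 / q) ≤ C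
    ↔ ∀ E : Set (Fin n → ℝ) → Set (Fin n → ℝ),
        (∀ Q : Set (Fin n → ℝ), IsDyadicCube Q → E Q ⊆ Q ∧ MeasurableSet (E Q)) →
        (∀ Q Q' : Set (Fin n → ℝ), IsDyadicCube Q → IsDyadicCube Q' → Q ≠ Q' →
          Disjoint (E Q) (E Q')) →
        (∑' Q : {Q : Set (Fin n → ℝ) // IsDyadicCube Q}, b Q.1 ^ q * μ (E Q.1)) ^ (1 / q) ≤ C :=
  lq_linfty_norm_iff_disjoint_sets_general μ q hq b C
end
end
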